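/- Let p be a prime number and let K ⊆ E ⊆ F be a tower of fields of characteristic p. Assume that F is separable over K (i.e., F ⊗_K K̄ is reduced for an algebraic closure K̄ of K) and that E = E^p·K, meaning that E is generated as a field over (the image of) K by the set {x^p : x ∈ E} of p-th powers of its elements. Then F is separable over E (i.e., F ⊗_E Ē is reduced for an algebraic closure Ē of E). -/

import Mathlib

open scoped TensorProduct
open TensorProduct

theorem tensor_coeff_eq_zero {E F N ι : Type*} [Field E] [AddCommGroup F] [Module E F]
    [AddCommGroup N] [Module E N]
    {v : ι → F} (hv : LinearIndependent E v) (s : Finset ι) (n : ι → N)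
    (h : ∑ i ∈ s, v i ⊗ₜ[E] n i = 0) : ∀ i ∈ s, n i = 0 := by
  classical
  set V := Submodule.span E (Set.range v) with hV
  let b : Module.Basis ι E V := Module.Basis.span hv
  let j : V →ₗ[E] F := V.subtype
  have hinj : Function.Injective (LinearMap.rTensor N j) :=
    Module.Flat.rTensor_preserves_injective_linearMap j V.injective_subtype
  have h0 : ∑ i ∈ s, (b i) ⊗ₜ[E] (n i) = (0 : V ⊗[E] N) := by
    apply hinj
    rw [map_zero, map_sum]
    have hb : ∀ i : ι, ((b i : V) : F) = v i := fun i => congrArg Subtype.val (Module.Basis.span_apply hv i)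
    simpa only [LinearMap.rTensor_tmul, j, Submodule.coe_subtype, hb] using h
  let Φ : V ⊗[E] N →ₗ[E] (ι →₀ N) :=
    (finsuppScalarLeft E N ι).toLinearMap ∘ₗ LinearMap.rTensor N b.repr.toLinearMap
  have hΦ : ∀ (i : ι) (m : N), Φ ((b i) ⊗ₜ[E] m) = Finsupp.single i m := by
    intro i m
    simp only [Φ, LinearMap.coe_comp, Function.comp_apply, LinearMap.rTensor_tmul,
      LinearEquiv.coe_coe, Module.Basis.repr_self]
    rw [← finsuppScalarLeft_symm_apply_single, LinearEquiv.apply_symm_apply]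
  intro k hk
  have h1 : ∑ i ∈ s, Finsupp.single i (n i) = (0 : ι →₀ N) := by
    have h2 := congrArg Φ h0
    rw [map_sum, map_zero] at h2
    simpa only [hΦ] using h2
  have h2 := congrArg (fun f : ι →₀ N => f k) h1
  simp only [Finsupp.finset_sum_apply, Finsupp.coe_zero, Pi.zero_apply] at h2
  rwa [Finset.sum_eq_single k (fun i _ hik => Finsupp.single_eq_of_ne' hik)
    (fun hks => absurd hk hks), Finsupp.single_eq_same] at h2

theorem frob_lift {p : ℕ} (hp : p.Prime) (K F : Type*) [Field K] [Field F]
    [Algebra K F] [CharP K p] [CharP F p]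
    (hred : IsReduced (F ⊗[K] AlgebraicClosure K))
    (r : K → AlgebraicClosure K)
    (hroot : ∀ a, r a ^ p = algebraMap K (AlgebraicClosure K) a)
    {ι : Type*} (s : Finset ι) (c : ι → K) (h : ι → F)
    (hrel : ∑ i ∈ s, c i • (h i ^ p) = 0) :
    ∑ i ∈ s, h i ⊗ₜ[K] r (c i) = 0 := by
  classical
  haveI : Fact p.Prime := ⟨hp⟩
  haveI : Nontrivial (F ⊗[K] (AlgebraicClosure K)) := inferInstance
  haveI : CharP (F ⊗[K] (AlgebraicClosure K)) p :=
    charP_of_injective_algebraMap (algebraMap F (F ⊗[K] (AlgebraicClosure K))).injective p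
  haveI : ExpChar (F ⊗[K] (AlgebraicClosure K)) p := .prime hp
  set y : F ⊗[K] (AlgebraicClosure K) := ∑ i ∈ s, h i ⊗ₜ[K] r (c i) with hy
  have hyp : y ^ p = 0 := by
    rw [hy, sum_pow_char]
    have heach : ∀ i ∈ s, (h i ⊗ₜ[K] r (c i)) ^ p = (c i • h i ^ p) ⊗ₜ[K] (1 : (AlgebraicClosure K)) := by
      intro i _
      rw [Algebra.TensorProduct.tmul_pow, hroot, Algebra.algebraMap_eq_smul_one, tmul_smul,
        smul_tmul']
    rw [Finset.sum_congr rfl heach, ← sum_tmul, hrel, zero_tmul]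
  exact hred.eq_zero y ⟨p, hyp⟩

theorem mem_span_pow {p : ℕ} (hp : p.Prime) (K E : Type*) [Field K] [Field E]
    [Algebra K E]
    (hE : IntermediateField.adjoin K {x : E | ∃ y : E, y ^ p = x} = ⊤) (a : E) :
    a ∈ Submodule.span K {x : E | ∃ y : E, y ^ p = x} := by
  classical
  set P : Set E := {x : E | ∃ y : E, y ^ p = x} with hP
  have inv_mem : ∀ x ∈ Algebra.adjoin K P, x⁻¹ ∈ Algebra.adjoin K P := by
    intro x hx
    rcases eq_or_ne x 0 with rfl | hx0
    · simpa using Subalgebra.zero_mem _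
    have key : x⁻¹ = x ^ (p - 1) * (x⁻¹) ^ p := by
      rw [inv_pow, ← div_eq_mul_inv, eq_div_iff (pow_ne_zero _ hx0), inv_mul_eq_div,
        div_eq_iff hx0, ← pow_succ, Nat.sub_add_cancel hp.one_lt.le]
    rw [key]
    exact mul_mem (pow_mem hx _) (Algebra.subset_adjoin ⟨x⁻¹, rfl⟩)
  have htop : Algebra.adjoin K P = ⊤ := by
    have h1 := IntermediateField.adjoin_eq_algebra_adjoin K P inv_mem
    rw [hE] at h1
    rw [← h1, IntermediateField.top_toSubalgebra]
  -- P is a submonoid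
  let M : Submonoid E :=
    { carrier := P
      one_mem' := ⟨1, one_pow p⟩
      mul_mem' := fun {x y} ⟨a, ha⟩ ⟨b, hb⟩ => ⟨a * b, by rw [mul_pow, ha, hb]⟩ }
  have hspan : Submodule.span K P = ⊤ := by
    have := Algebra.adjoin_eq_span K (P : Set E)
    rw [htop] at this
    have hM : Submonoid.closure P = M := Submonoid.closure_eq M
    rw [hM] at this
    rw [show ((M : Set E)) = P from rfl] at this
    rw [← this]
    rfl
  rw [hspan]; trivial

theorem pow_linearIndependent {p : ℕ} (hp : p.Prime) (K E F : Type*)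
    [Field K] [Field E] [Field F]
    [Algebra K E] [Algebra E F] [Algebra K F] [IsScalarTower K E F]
    [CharP K p] [CharP E p] [CharP F p]
    (hKF : IsReduced (F ⊗[K] AlgebraicClosure K))
    (hE : IntermediateField.adjoin K {x : E | ∃ y : E, y ^ p = x} = ⊤)
    {ι : Type*} {v : ι → F} (hv : LinearIndependent E v) :
    LinearIndependent E (fun i => v i ^ p) := by
  classical
  haveI : Fact p.Prime := ⟨hp⟩
  set P : Set E := {x : E | ∃ y : E, y ^ p = x} with hPdef
  -- choose p-th roots of elements of P
  have hρ : ∀ x : E, ∃ y : E, x ∈ P → y ^ p = x := by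
    intro x
    by_cases hx : x ∈ P
    · exact ⟨Classical.choose hx, fun _ => Classical.choose_spec hx⟩
    · exact ⟨0, fun h => absurd h hx⟩
  choose ρ hρspec using hρ
  -- p-th roots in the algebraic closure of K
  have hr : ∀ a : K, ∃ b : AlgebraicClosure K, b ^ p = algebraMap K (AlgebraicClosure K) a := by
    haveI : ExpChar (AlgebraicClosure K) p := .prime hp
    intro a
    exact ⟨(frobeniusEquiv (AlgebraicClosure K) p).symm (algebraMap K (AlgebraicClosure K) a), by
      have := (frobeniusEquiv (AlgebraicClosure K) p).apply_symm_apply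
        (algebraMap K (AlgebraicClosure K) a)
      rwa [frobeniusEquiv_apply] at this⟩
  choose r hroot using hr
  rw [linearIndependent_iff']
  intro s g hrel i hi
  have H : ∀ j : ι, ∃ cc : E →₀ K, ↑cc.support ⊆ P ∧ (cc.sum fun mi t => t • mi) = g j :=
    fun j => Submodule.mem_span_set.1 (mem_span_pow hp K E hE (g j))
  choose c hcP hcsum using H
  set S : Finset ((_ : ι) × E) := s.sigma (fun j => (c j).support) with hS
  have hbig : ∑ q ∈ S, (c q.1 q.2) • ((ρ q.2 • v q.1) ^ p) = 0 := by
    rw [hS, Finset.sum_sigma]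
    calc ∑ j ∈ s, ∑ x ∈ (c j).support, (c j x) • ((ρ x • v j) ^ p)
        = ∑ j ∈ s, g j • v j ^ p := by
          refine Finset.sum_congr rfl fun j hj => ?_
          rw [← hcsum j, Finsupp.sum, Finset.sum_smul]
          refine Finset.sum_congr rfl fun x hx => ?_
          rw [smul_pow, hρspec x (hcP j hx), smul_assoc]
      _ = 0 := hrel
  have hlift := frob_lift hp K F hKF r hroot S (fun q => c q.1 q.2)
    (fun q => ρ q.2 • v q.1) hbig
  set Ψ := (TensorProduct.AlgebraTensorModule.cancelBaseChange K E E F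
    (AlgebraicClosure K)).symm.toLinearMap with hΨ
  have hmap := congrArg Ψ hlift
  rw [map_zero, map_sum] at hmap
  have hterm : ∀ q ∈ S,
      Ψ ((ρ q.2 • v q.1) ⊗ₜ[K] r (c q.1 q.2))
        = v q.1 ⊗ₜ[E] (ρ q.2 ⊗ₜ[K] r (c q.1 q.2)) := by
    intro q _
    rw [hΨ, LinearEquiv.coe_coe, TensorProduct.AlgebraTensorModule.cancelBaseChange_symm_tmul,
      smul_tmul, smul_tmul', smul_eq_mul, mul_one]
  rw [Finset.sum_congr rfl hterm, hS, Finset.sum_sigma] at hmap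
  have hz : ∀ j ∈ s,
      ∑ x ∈ (c j).support, ρ x ⊗ₜ[K] r (c j x) = (0 : E ⊗[K] AlgebraicClosure K) := by
    refine tensor_coeff_eq_zero hv s _ ?_
    rw [← hmap]
    exact Finset.sum_congr rfl fun j _ => tmul_sum _ _ _
  have hzi := hz i hi
  haveI : Nontrivial (E ⊗[K] AlgebraicClosure K) := inferInstance
  haveI : CharP (E ⊗[K] AlgebraicClosure K) p :=
    charP_of_injective_algebraMap
      (algebraMap E (E ⊗[K] AlgebraicClosure K)).injective p
  haveI : ExpChar (E ⊗[K] AlgebraicClosure K) p := .prime hp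
  have hpow : (∑ x ∈ (c i).support, ρ x ⊗ₜ[K] r (c i x)) ^ p
      = (0 : E ⊗[K] AlgebraicClosure K) := by
    rw [hzi]; exact zero_pow hp.ne_zero
  rw [sum_pow_char] at hpow
  have hterm2 : ∀ x ∈ (c i).support,
      (ρ x ⊗ₜ[K] r (c i x)) ^ p = (c i x • x) ⊗ₜ[K] (1 : AlgebraicClosure K) := by
    intro x hx
    rw [Algebra.TensorProduct.tmul_pow, hρspec x (hcP i hx), hroot,
      Algebra.algebraMap_eq_smul_one, tmul_smul, smul_tmul']
  rw [Finset.sum_congr rfl hterm2, ← sum_tmul] at hpow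
  have hgi : (g i) ⊗ₜ[K] (1 : AlgebraicClosure K) = 0 := by
    rw [← hcsum i, Finsupp.sum]
    exact hpow
  have hinj : Function.Injective
      (Algebra.TensorProduct.includeLeft :
        E →ₐ[K] E ⊗[K] AlgebraicClosure K) :=
    RingHom.injective (Algebra.TensorProduct.includeLeft :
      E →ₐ[K] E ⊗[K] AlgebraicClosure K).toRingHom
  apply hinj
  simpa using hgi

/-- Let `p` be a prime and `K ⊆ E ⊆ F` a tower of fields of
characteristic `p`.  If `F` is separable over `K` (i.e. `F ⊗[K] K̄` is reduced for an
algebraic closure `K̄` of `K`) and `E = EᵖK` (the intermediate field of `E/K` generated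
by the `p`-th powers of elements of `E` is all of `E`), then `F` is separable over `E`
(i.e. `F ⊗[E] Ē` is reduced for an algebraic closure `Ē` of `E`). -/
theorem separable_of_adjoin_pow_eq_top (p : ℕ) (hp : p.Prime)
    (K E F : Type*) [Field K] [Field E] [Field F]
    [Algebra K E] [Algebra E F] [Algebra K F] [IsScalarTower K E F]
    [CharP K p] [CharP E p] [CharP F p]
    (hKF : IsReduced (F ⊗[K] AlgebraicClosure K))
    (hE : IntermediateField.adjoin K {x : E | ∃ y : E, y ^ p = x} = ⊤) :
    IsReduced (F ⊗[E] AlgebraicClosure E) := by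
  classical
  haveI : Fact p.Prime := ⟨hp⟩
  haveI : Nontrivial (F ⊗[E] AlgebraicClosure E) := inferInstance
  haveI : CharP (F ⊗[E] AlgebraicClosure E) p :=
    charP_of_injective_algebraMap (algebraMap F (F ⊗[E] AlgebraicClosure E)).injective p
  haveI : ExpChar (F ⊗[E] AlgebraicClosure E) p := .prime hp
  have core : ∀ x : F ⊗[E] AlgebraicClosure E, x ^ p = 0 → x = 0 := by
    intro x hx
    set b := Module.Basis.ofVectorSpace E F with hb
    set Φ : F ⊗[E] AlgebraicClosure E ≃ₗ[E]
        (Module.Basis.ofVectorSpaceIndex E F →₀ AlgebraicClosure E) :=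
      (TensorProduct.congr b.repr (LinearEquiv.refl E (AlgebraicClosure E))).trans
        (finsuppScalarLeft E (AlgebraicClosure E) _) with hΦ
    have hΦtm : ∀ (i) (e : AlgebraicClosure E), Φ (b i ⊗ₜ[E] e) = Finsupp.single i e := by
      intro i e
      rw [hΦ, LinearEquiv.trans_apply, TensorProduct.congr_tmul, LinearEquiv.refl_apply,
        Module.Basis.repr_self, ← finsuppScalarLeft_symm_apply_single, LinearEquiv.apply_symm_apply]
    set cc := Φ x with hcc
    have hexp : x = ∑ i ∈ cc.support, b i ⊗ₜ[E] cc i := by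
      have h1 : Φ.toLinearMap (∑ i ∈ cc.support, b i ⊗ₜ[E] cc i) = cc := by
        rw [map_sum]
        have h2 : ∀ i ∈ cc.support,
            Φ.toLinearMap (b i ⊗ₜ[E] cc i) = Finsupp.single i (cc i) := fun i _ => hΦtm i (cc i)
        rw [Finset.sum_congr rfl h2]
        exact Finsupp.sum_single cc
      have h3 := congrArg Φ.symm h1
      rw [LinearEquiv.coe_coe, LinearEquiv.symm_apply_apply] at h3
      rw [h3, hcc, LinearEquiv.symm_apply_apply]
    have hxp : ∑ i ∈ cc.support, (b i ^ p) ⊗ₜ[E] (cc i ^ p)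
        = (0 : F ⊗[E] AlgebraicClosure E) := by
      rw [← hx, hexp, sum_pow_char]
      exact Finset.sum_congr rfl fun i _ => (Algebra.TensorProduct.tmul_pow _ _ _).symm
    have hLI : LinearIndependent E (fun i => b i ^ p) :=
      pow_linearIndependent hp K E F hKF hE b.linearIndependent
    have hz := tensor_coeff_eq_zero hLI cc.support (fun i => cc i ^ p) hxp
    rw [hexp]
    refine Finset.sum_eq_zero fun i hi => ?_
    have : cc i = 0 := pow_eq_zero_iff hp.ne_zero |>.1 (hz i hi)
    rw [this, tmul_zero]
  have key : ∀ (k : ℕ) (x : F ⊗[E] AlgebraicClosure E), x ^ p ^ k = 0 → x = 0 := by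
    intro k
    induction k with
    | zero => intro x hx; simpa using hx
    | succ k ih =>
      intro x hx
      refine ih x (core _ ?_)
      rw [← pow_mul, ← pow_succ]
      exact hx
  constructor
  intro x ⟨n, hn⟩
  refine key n x ?_
  rw [← Nat.sub_add_cancel (Nat.lt_pow_self (n := n) hp.one_lt).le, pow_add, hn, mul_zero]
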